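/- Let k ≥ 2. Then the series Σ_{i=1}^{∞} u_i·k^{−2i} converges and lim_{n→∞} M_k(n)/k^{2n} = (Σ_{i=1}^{∞} u_i·k^{−2i})^2. -/

import Mathlib

open Classical Finset Filter

/-- A border of `w`: a non-empty word that is both a proper prefix and a suffix of `w`. -/
def IsBorder {k : ℕ} (w b : List (Fin k)) : Prop :=
  b ≠ [] ∧ b ≠ w ∧ b <+: w ∧ b <:+ w

/-- A word is unbordered if it has no border. -/
def Unbordered {k : ℕ} (w : List (Fin k)) : Prop :=
  ∀ b, ¬ IsBorder w b

/-- A right-border of `(u,v)`: a non-empty proper suffix of `u` that is a proper prefix of `v`. -/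
def IsRightBorder {k : ℕ} (u v b : List (Fin k)) : Prop :=
  b ≠ [] ∧ b <:+ u ∧ b ≠ u ∧ b <+: v ∧ b ≠ v

/-- A left-border of `(u,v)`: a non-empty proper prefix of `u` that is a proper suffix of `v`. -/
def IsLeftBorder {k : ℕ} (u v b : List (Fin k)) : Prop :=
  b ≠ [] ∧ b <+: u ∧ b ≠ u ∧ b <:+ v ∧ b ≠ v

def MutuallyBordered {k : ℕ} (u v : List (Fin k)) : Prop :=
  (∃ b, IsRightBorder u v b) ∧ (∃ b, IsLeftBorder u v b)

def MutuallyUnbordered {k : ℕ} (u v : List (Fin k)) : Prop :=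
  (¬ ∃ b, IsRightBorder u v b) ∧ (¬ ∃ b, IsLeftBorder u v b)

def RightBordered {k : ℕ} (u v : List (Fin k)) : Prop :=
  (∃ b, IsRightBorder u v b) ∧ (¬ ∃ b, IsLeftBorder u v b)

/-- `lso u v`: the length of the shortest right-border of `(u,v)`, or `0` if there is none. -/
noncomputable def lso {k : ℕ} (u v : List (Fin k)) : ℕ :=
  sInf {m | ∃ b : List (Fin k), IsRightBorder u v b ∧ b.length = m}

def IsShortestRightBorder {k : ℕ} (u v b : List (Fin k)) : Prop :=
  IsRightBorder u v b ∧ ∀ b', IsRightBorder u v b' → b.length ≤ b'.length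

def IsShortestLeftBorder {k : ℕ} (u v b : List (Fin k)) : Prop :=
  IsLeftBorder u v b ∧ ∀ b', IsLeftBorder u v b' → b.length ≤ b'.length

/-- The finite set of all length-`n` words over `Σ_k`. -/
def Words (k n : ℕ) : Finset (List (Fin k)) :=
  (Finset.univ : Finset (Fin n → Fin k)).image List.ofFn

/-- `UB k n`: the number of unbordered words of length `n` over `Σ_k`. -/
noncomputable def UB (k n : ℕ) : ℕ :=
  ((Words k n).filter Unbordered).card

/-- `M k n`: the number of mutually bordered pairs of length-`n` words over `Σ_k`. -/
noncomputable def M (k n : ℕ) : ℕ :=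
  ((Words k n ×ˢ Words k n).filter (fun p => MutuallyBordered p.1 p.2)).card

/-- `R k n`: the number of right-bordered pairs of length-`n` words over `Σ_k`. -/
noncomputable def R (k n : ℕ) : ℕ :=
  ((Words k n ×ˢ Words k n).filter (fun p => RightBordered p.1 p.2)).card

/-- `U k n`: the number of mutually unbordered pairs of length-`n` words over `Σ_k`. -/
noncomputable def U (k n : ℕ) : ℕ :=
  ((Words k n ×ˢ Words k n).filter (fun p => MutuallyUnbordered p.1 p.2)).card

/-- `G u v m`: the number of unbordered words of length `m` over `Σ_k` having
`u` as a prefix and `v` as a suffix. -/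
noncomputable def G {k : ℕ} (u v : List (Fin k)) (m : ℕ) : ℕ :=
  ((Words k m).filter (fun w => Unbordered w ∧ u <+: w ∧ v <:+ w)).card

/-
The shortest right-border `b` and the shortest left-border `c` of a mutually bordered pair
`(u, v)` of length-`n` words are unbordered, because a border of a shortest right-border is a
shorter right-border. They are also the only unbordered ones: of two unbordered words that are
both prefixes of one word and suffixes of another, the shorter would be a border of the longer.
So the mutually bordered pairs are partitioned according to `(b, c)`, with `b, c` unbordered of
length `< n`. When `|b| + |c| ≤ n`, the class of `(b, c)` has exactly
`k ^ (2 (n - |b| - |c|))` elements, so the classes with `|b|, |c| ≤ n / 2` contribute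
`k ^ (2n) (∑_{i ≤ n/2} u_i k^{-2i})²` in total. For a fixed `b` all classes together have at most
`k ^ (2 (n - |b|))` elements, so the classes with `|b| > n / 2` or `|c| > n / 2` contribute at
most `2 k ^ (2n) ∑_{n/2 < i < n} u_i k^{-2i}`, a tail of the series, which converges because
`u_i ≤ k ^ i`.
-/

section Words

variable {k n : ℕ}

theorem mem_Words {w : List (Fin k)} : w ∈ Words k n ↔ w.length = n := by
  constructor
  · rintro h
    obtain ⟨f, -, rfl⟩ := Finset.mem_image.mp h
    exact List.length_ofFn
  · rintro rfl
    exact Finset.mem_image.mpr ⟨w.get, Finset.mem_univ _, List.ofFn_get w⟩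

theorem card_Words : #(Words k n) = k ^ n := by
  rw [Words, Finset.card_image_of_injective _ List.ofFn_injective]
  simp

def wordsWith (k n : ℕ) (p s : List (Fin k)) : Finset (List (Fin k)) :=
  (Words k n).filter fun w => p <+: w ∧ s <:+ w

theorem wordsWith_eq_image {p s : List (Fin k)} (h : p.length + s.length ≤ n) :
    wordsWith k n p s = (Words k (n - (p.length + s.length))).image (fun w => p ++ w ++ s) := by
  ext w
  simp only [wordsWith, Finset.mem_filter, Finset.mem_image, mem_Words]
  constructor
  · rintro ⟨hw, ⟨t, rfl⟩, hs⟩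
    rw [List.length_append] at hw
    obtain ⟨m, rfl⟩ : s <:+ t := List.suffix_of_suffix_length_le hs ⟨p, rfl⟩ (by omega)
    refine ⟨m, ?_, by simp⟩
    simp only [List.length_append] at hw ⊢
    omega
  · rintro ⟨m, hm, rfl⟩
    refine ⟨?_, ⟨m ++ s, by simp⟩, ⟨p ++ m, rfl⟩⟩
    simp only [List.length_append, hm]
    omega

theorem card_wordsWith {p s : List (Fin k)} (h : p.length + s.length ≤ n) :
    #(wordsWith k n p s) = k ^ (n - (p.length + s.length)) := by
  rw [wordsWith_eq_image h, Finset.card_image_of_injective _ (fun a b hab => by simpa using hab),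
    card_Words]

theorem IsBorder.length_lt {w b : List (Fin k)} (h : IsBorder w b) : b.length < w.length :=
  lt_of_le_of_ne h.2.2.1.length_le fun hl => h.2.1 (h.2.2.1.eq_of_length hl)

theorem Unbordered.eq_of_isPrefix_of_isSuffix {b c x y : List (Fin k)} (hb : Unbordered b)
    (hc : Unbordered c) (hb0 : b ≠ []) (hc0 : c ≠ []) (hbx : b <+: x) (hcx : c <+: x)
    (hby : b <:+ y) (hcy : c <:+ y) : b = c := by
  by_contra hne
  rcases le_total b.length c.length with hle | hle
  · exact hc b ⟨hb0, hne, List.prefix_of_prefix_length_le hbx hcx hle,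
      List.suffix_of_suffix_length_le hby hcy hle⟩
  · exact hb c ⟨hc0, Ne.symm hne, List.prefix_of_prefix_length_le hcx hbx hle,
      List.suffix_of_suffix_length_le hcy hby hle⟩

theorem isLeftBorder_iff_isRightBorder {u v b : List (Fin k)} :
    IsLeftBorder u v b ↔ IsRightBorder v u b := by
  unfold IsLeftBorder IsRightBorder
  tauto

theorem isRightBorder_iff_of_length_eq {u v b : List (Fin k)} (hu : u.length = n)
    (hv : v.length = n) :
    IsRightBorder u v b ↔ b ≠ [] ∧ b.length < n ∧ b <:+ u ∧ b <+: v := by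
  constructor
  · rintro ⟨hb0, hbu, hbu', hbv, -⟩
    exact ⟨hb0, hu ▸ lt_of_le_of_ne hbu.length_le fun hl => hbu' (hbu.eq_of_length hl), hbu,
      hbv⟩
  · rintro ⟨hb0, hbn, hbu, hbv⟩
    exact ⟨hb0, hbu, by rintro rfl; omega, hbv, by rintro rfl; omega⟩

theorem IsRightBorder.of_isBorder {u v b c : List (Fin k)} (h : IsRightBorder u v b)
    (hc : IsBorder b c) : IsRightBorder u v c := by
  obtain ⟨-, hbu, -, hbv, -⟩ := h
  have hlt := hc.length_lt
  refine ⟨hc.1, hc.2.2.2.trans hbu, ?_, hc.2.2.1.trans hbv, ?_⟩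
  · rintro rfl
    exact absurd hbu.length_le (by omega)
  · rintro rfl
    exact absurd hbv.length_le (by omega)

theorem exists_unbordered_isRightBorder {u v b : List (Fin k)} (h : IsRightBorder u v b) :
    ∃ c, Unbordered c ∧ IsRightBorder u v c := by
  induction hb : b.length using Nat.strong_induction_on generalizing b with
  | _ m ih =>
    by_cases hu : Unbordered b
    · exact ⟨b, hu, h⟩
    · obtain ⟨c, hc⟩ : ∃ c, IsBorder b c := by simpa [Unbordered] using hu
      exact ih c.length (hb ▸ hc.length_lt) (h.of_isBorder hc) rfl

end Words

section Counting

variable {k n : ℕ}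

noncomputable def unborderedWords (k : ℕ) (I : Finset ℕ) : Finset (List (Fin k)) :=
  I.biUnion fun i => (Words k (i + 1)).filter Unbordered

theorem mem_unborderedWords {I : Finset ℕ} {b : List (Fin k)} :
    b ∈ unborderedWords k I ↔ Unbordered b ∧ ∃ i ∈ I, b.length = i + 1 := by
  simp only [unborderedWords, Finset.mem_biUnion, Finset.mem_filter, mem_Words]
  tauto

theorem mem_unborderedWords_range {b : List (Fin k)} :
    b ∈ unborderedWords k (range (n - 1)) ↔ Unbordered b ∧ b ≠ [] ∧ b.length < n := by
  rw [mem_unborderedWords, ← List.length_pos_iff]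
  constructor
  · rintro ⟨hb, i, hi, hl⟩
    rw [Finset.mem_range] at hi
    exact ⟨hb, by omega, by omega⟩
  · rintro ⟨hb, h0, hn⟩
    exact ⟨hb, b.length - 1, Finset.mem_range.mpr (by omega), by omega⟩

theorem unborderedWords_mono {I J : Finset ℕ} (h : I ⊆ J) :
    unborderedWords k I ⊆ unborderedWords k J :=
  Finset.biUnion_subset_biUnion_of_subset_left _ h

theorem unborderedWords_union (I J : Finset ℕ) :
    unborderedWords k (I ∪ J) = unborderedWords k I ∪ unborderedWords k J :=
  Finset.union_biUnion

theorem disjoint_unborderedWords {I J : Finset ℕ} (h : Disjoint I J) :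
    Disjoint (unborderedWords k I) (unborderedWords k J) := by
  refine Finset.disjoint_left.mpr fun b hI hJ => ?_
  obtain ⟨-, i, hi, hbi⟩ := mem_unborderedWords.mp hI
  obtain ⟨-, j, hj, hbj⟩ := mem_unborderedWords.mp hJ
  exact Finset.disjoint_left.mp h hi (by rwa [show i = j by omega])

theorem eq_of_mem_unborderedWords {I J : Finset ℕ} {b c x y : List (Fin k)}
    (hb : b ∈ unborderedWords k I) (hc : c ∈ unborderedWords k J) (hbx : b <+: x)
    (hcx : c <+: x) (hby : b <:+ y) (hcy : c <:+ y) : b = c := by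
  obtain ⟨hb, i, -, hbi⟩ := mem_unborderedWords.mp hb
  obtain ⟨hc, j, -, hcj⟩ := mem_unborderedWords.mp hc
  refine hb.eq_of_isPrefix_of_isSuffix hc ?_ ?_ hbx hcx hby hcy <;>
    rw [← List.length_pos_iff] <;> omega

/-- `b` plays the role of a right-border and `c` of a left-border of the pair. -/
def borderedPairs (k n : ℕ) (b c : List (Fin k)) : Finset (List (Fin k) × List (Fin k)) :=
  wordsWith k n c b ×ˢ wordsWith k n b c

theorem mem_borderedPairs {b c u v : List (Fin k)} :
    (u, v) ∈ borderedPairs k n b c ↔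
      (u.length = n ∧ c <+: u ∧ b <:+ u) ∧ (v.length = n ∧ b <+: v ∧ c <:+ v) := by
  simp only [borderedPairs, wordsWith, Finset.mem_product, Finset.mem_filter, mem_Words]

theorem card_borderedPairs_comm (b c : List (Fin k)) :
    #(borderedPairs k n b c) = #(borderedPairs k n c b) := by
  rw [borderedPairs, borderedPairs, Finset.card_product, Finset.card_product, mul_comm]

theorem card_borderedPairs {b c : List (Fin k)} (h : b.length + c.length ≤ n) :
    #(borderedPairs k n b c) =
      k ^ (n - (b.length + c.length)) * k ^ (n - (b.length + c.length)) := by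
  rw [borderedPairs, Finset.card_product, card_wordsWith (by omega), card_wordsWith h, add_comm]

theorem filter_mutuallyBordered_eq_biUnion :
    (Words k n ×ˢ Words k n).filter (fun p => MutuallyBordered p.1 p.2) =
      (unborderedWords k (range (n - 1)) ×ˢ unborderedWords k (range (n - 1))).biUnion
        fun bc => borderedPairs k n bc.1 bc.2 := by
  ext ⟨u, v⟩ : 1
  rw [Finset.mem_filter]
  simp only [Finset.mem_product, Finset.mem_biUnion, Prod.exists, mem_borderedPairs, mem_Words,
    MutuallyBordered]
  constructor
  · rintro ⟨⟨hu, hv⟩, ⟨b, hb⟩, ⟨c, hc⟩⟩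
    obtain ⟨b, hbU, hb⟩ := exists_unbordered_isRightBorder hb
    obtain ⟨c, hcU, hc⟩ :=
      exists_unbordered_isRightBorder (isLeftBorder_iff_isRightBorder.mp hc)
    obtain ⟨hb0, hbn, hbu, hbv⟩ := (isRightBorder_iff_of_length_eq hu hv).mp hb
    obtain ⟨hc0, hcn, hcv, hcu⟩ := (isRightBorder_iff_of_length_eq hv hu).mp hc
    exact ⟨b, c, ⟨mem_unborderedWords_range.mpr ⟨hbU, hb0, hbn⟩,
      mem_unborderedWords_range.mpr ⟨hcU, hc0, hcn⟩⟩, ⟨hu, hcu, hbu⟩, ⟨hv, hbv, hcv⟩⟩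
  · rintro ⟨b, c, ⟨hb, hc⟩, ⟨hu, hcu, hbu⟩, ⟨hv, hbv, hcv⟩⟩
    obtain ⟨-, hb0, hbn⟩ := mem_unborderedWords_range.mp hb
    obtain ⟨-, hc0, hcn⟩ := mem_unborderedWords_range.mp hc
    exact ⟨⟨hu, hv⟩,
      ⟨b, (isRightBorder_iff_of_length_eq hu hv).mpr ⟨hb0, hbn, hbu, hbv⟩⟩,
      ⟨c, isLeftBorder_iff_isRightBorder.mpr
        ((isRightBorder_iff_of_length_eq hv hu).mpr ⟨hc0, hcn, hcv, hcu⟩)⟩⟩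

theorem M_eq_sum :
    M k n = ∑ b ∈ unborderedWords k (range (n - 1)),
      ∑ c ∈ unborderedWords k (range (n - 1)), #(borderedPairs k n b c) := by
  rw [M, filter_mutuallyBordered_eq_biUnion, Finset.card_biUnion, Finset.sum_product]
  rintro ⟨b, c⟩ hbc ⟨b', c'⟩ hbc' hne
  rw [Finset.mem_coe, Finset.mem_product] at hbc hbc'
  refine Finset.disjoint_left.mpr fun ⟨u, v⟩ h h' => hne ?_
  rw [mem_borderedPairs] at h h'
  dsimp only at hbc hbc' h h'
  rw [eq_of_mem_unborderedWords hbc.1 hbc'.1 h.2.2.1 h'.2.2.1 h.1.2.2 h'.1.2.2,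
    eq_of_mem_unborderedWords hbc.2 hbc'.2 h.1.2.1 h'.1.2.1 h.2.2.2 h'.2.2.2]

theorem sum_card_borderedPairs_le (I : Finset ℕ) {b : List (Fin k)} (hb : b.length ≤ n) :
    ∑ c ∈ unborderedWords k I, #(borderedPairs k n b c) ≤
      k ^ (n - b.length) * k ^ (n - b.length) := by
  rw [← Finset.card_biUnion]
  · calc #((unborderedWords k I).biUnion (borderedPairs k n b))
        ≤ #(wordsWith k n [] b ×ˢ wordsWith k n b []) := by
          refine Finset.card_le_card (Finset.biUnion_subset.mpr fun c _ => ?_)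
          rintro ⟨u, v⟩ h
          simp only [mem_borderedPairs] at h
          simp only [wordsWith, Finset.mem_product, Finset.mem_filter, mem_Words,
            List.nil_prefix, List.nil_suffix]
          tauto
      _ = k ^ (n - b.length) * k ^ (n - b.length) := by
          rw [Finset.card_product, card_wordsWith (by simpa), card_wordsWith (by simpa)]
          simp
  · intro c hc c' hc' hne
    refine Finset.disjoint_left.mpr fun ⟨u, v⟩ h h' => hne ?_
    rw [mem_borderedPairs] at h h'
    exact eq_of_mem_unborderedWords hc hc' h.1.2.1 h'.1.2.1 h.2.2.2 h'.2.2.2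

theorem length_le_of_mem_unborderedWords {I : Finset ℕ} (hI : ∀ i ∈ I, i < n)
    {b : List (Fin k)} (hb : b ∈ unborderedWords k I) : b.length ≤ n := by
  obtain ⟨-, i, hi, hbi⟩ := mem_unborderedWords.mp hb
  have := hI i hi
  omega

theorem sum_sum_card_borderedPairs_le_M {I : Finset ℕ} (hI : I ⊆ range (n - 1)) :
    ∑ b ∈ unborderedWords k I, ∑ c ∈ unborderedWords k I, #(borderedPairs k n b c) ≤
      M k n := by
  rw [M_eq_sum, ← Finset.sum_product', ← Finset.sum_product']
  exact Finset.sum_le_sum_of_subset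
    (Finset.product_subset_product (unborderedWords_mono hI) (unborderedWords_mono hI))

theorem M_le :
    M k n ≤ ∑ b ∈ unborderedWords k (range (n / 2)),
        ∑ c ∈ unborderedWords k (range (n / 2)), #(borderedPairs k n b c) +
      2 * ∑ b ∈ unborderedWords k (Ico (n / 2) (n - 1)),
        k ^ (n - b.length) * k ^ (n - b.length) := by
  have hI : range (n / 2) ∪ Ico (n / 2) (n - 1) = range (n - 1) := by
    rw [Finset.range_eq_Ico, Finset.range_eq_Ico,
      Finset.Ico_union_Ico_eq_Ico (Nat.zero_le _) (by omega)]
  have hI' : Disjoint (range (n / 2)) (Ico (n / 2) (n - 1)) := by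
    rw [Finset.range_eq_Ico]
    exact Finset.Ico_disjoint_Ico_consecutive _ _ _
  set S := unborderedWords k (range (n / 2))
  set L := unborderedWords k (Ico (n / 2) (n - 1))
  have hsplit (g : List (Fin k) → ℕ) :
      ∑ b ∈ unborderedWords k (range (n - 1)), g b = ∑ b ∈ S, g b + ∑ b ∈ L, g b := by
    rw [← hI, unborderedWords_union, Finset.sum_union (disjoint_unborderedWords hI')]
  have hL {b : List (Fin k)} (hb : b ∈ L) : b.length ≤ n :=
    length_le_of_mem_unborderedWords (fun i hi => by rw [Finset.mem_Ico] at hi; omega) hb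
  have hS_L : ∑ b ∈ S, ∑ c ∈ L, #(borderedPairs k n b c) ≤
      ∑ c ∈ L, k ^ (n - c.length) * k ^ (n - c.length) := by
    rw [Finset.sum_comm]
    refine Finset.sum_le_sum fun c hc => ?_
    simp_rw [card_borderedPairs_comm _ c]
    exact sum_card_borderedPairs_le _ (hL hc)
  have hL_D : ∑ b ∈ L, ∑ c ∈ unborderedWords k (range (n - 1)), #(borderedPairs k n b c) ≤
      ∑ b ∈ L, k ^ (n - b.length) * k ^ (n - b.length) :=
    Finset.sum_le_sum fun b hb => sum_card_borderedPairs_le _ (hL hb)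
  rw [M_eq_sum, hsplit, Finset.sum_congr rfl fun b _ => hsplit _, Finset.sum_add_distrib]
  omega

end Counting

section Asymptotics

variable {k : ℕ}

noncomputable def ubTerm (k i : ℕ) : ℝ :=
  UB k (i + 1) / (k : ℝ) ^ (2 * (i + 1))

theorem UB_le_pow (n : ℕ) : UB k n ≤ k ^ n :=
  (Finset.card_filter_le _ _).trans_eq card_Words

theorem summable_ubTerm (hk : 2 ≤ k) : Summable (ubTerm k) := by
  have hk1 : (1 : ℝ) < k := by exact_mod_cast hk
  have hk0 : (k : ℝ) ≠ 0 := by positivity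
  refine Summable.of_nonneg_of_le (fun i => by unfold ubTerm; positivity) (fun i => ?_)
    (summable_geometric_of_lt_one (by positivity) (inv_lt_one_of_one_lt₀ hk1))
  calc ubTerm k i ≤ (k : ℝ) ^ (i + 1) / (k : ℝ) ^ (2 * (i + 1)) := by
        unfold ubTerm
        gcongr
        exact_mod_cast UB_le_pow (i + 1)
    _ = (k : ℝ)⁻¹ ^ (i + 1) := by
        rw [mul_comm, pow_mul, sq, div_mul_cancel_left₀ (pow_ne_zero _ hk0), inv_pow]
    _ ≤ (k : ℝ)⁻¹ ^ i :=
        pow_le_pow_of_le_one (by positivity) (inv_le_one_of_one_le₀ hk1.le) (by omega)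

theorem Summable.tendsto_sum_Ico_zero {G α : Type*} [AddCommGroup G] [TopologicalSpace G]
    [IsTopologicalAddGroup G] {f : ℕ → G} (hf : Summable f) {l : Filter α} {m N : α → ℕ}
    (hm : Tendsto m l atTop) (hN : Tendsto N l atTop) (hmN : ∀ x, m x ≤ N x) :
    Tendsto (fun x => ∑ i ∈ Ico (m x) (N x), f i) l (nhds 0) := by
  have h := (hf.tendsto_sum_tsum_nat.comp hN).sub (hf.tendsto_sum_tsum_nat.comp hm)
  rw [sub_self] at h
  exact h.congr fun x => (Finset.sum_Ico_eq_sub _ (hmN x)).symm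

theorem sum_unborderedWords_inv_pow (I : Finset ℕ) :
    ∑ b ∈ unborderedWords k I, ((k : ℝ) ^ (2 * b.length))⁻¹ = ∑ i ∈ I, ubTerm k i := by
  rw [unborderedWords, Finset.sum_biUnion]
  · refine Finset.sum_congr rfl fun i _ => ?_
    rw [Finset.sum_congr rfl fun b hb => by rw [mem_Words.mp (Finset.mem_filter.mp hb).1],
      Finset.sum_const, nsmul_eq_mul, ubTerm, UB, div_eq_mul_inv]
  · intro i _ j _ hij
    refine Finset.disjoint_left.mpr fun b hi hj => hij ?_
    have := (mem_Words.mp (Finset.mem_filter.mp hi).1).symm.trans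
      (mem_Words.mp (Finset.mem_filter.mp hj).1)
    omega

theorem pow_sub_mul_pow_sub {K : Type*} [Field K] {x : K} (hx : x ≠ 0) {m n : ℕ}
    (h : m ≤ n) : x ^ (n - m) * x ^ (n - m) = x ^ (2 * n) * (x ^ (2 * m))⁻¹ := by
  rw [pow_sub₀ _ hx h]
  ring

theorem cast_sum_sum_card_borderedPairs (hk : k ≠ 0) (n : ℕ) :
    ((∑ b ∈ unborderedWords k (range (n / 2)), ∑ c ∈ unborderedWords k (range (n / 2)),
        #(borderedPairs k n b c) : ℕ) : ℝ) =
      (k : ℝ) ^ (2 * n) * (∑ i ∈ range (n / 2), ubTerm k i) ^ 2 := by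
  have hlen {b : List (Fin k)} (hb : b ∈ unborderedWords k (range (n / 2))) :
      b.length ≤ n / 2 :=
    length_le_of_mem_unborderedWords (fun i hi => by rw [Finset.mem_range] at hi; omega) hb
  rw [← sum_unborderedWords_inv_pow, sq, Finset.sum_mul_sum, Finset.mul_sum]
  push_cast
  refine Finset.sum_congr rfl fun b hb => ?_
  rw [Finset.mul_sum]
  refine Finset.sum_congr rfl fun c hc => ?_
  have hbc : b.length + c.length ≤ n := by have := hlen hb; have := hlen hc; omega
  rw [card_borderedPairs hbc]
  push_cast
  rw [pow_sub_mul_pow_sub (Nat.cast_ne_zero.mpr hk) hbc]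
  ring

theorem cast_sum_pow_sub_mul_pow_sub (hk : k ≠ 0) (n : ℕ) :
    ((∑ b ∈ unborderedWords k (Ico (n / 2) (n - 1)), k ^ (n - b.length) * k ^ (n - b.length) :
        ℕ) : ℝ) = (k : ℝ) ^ (2 * n) * ∑ i ∈ Ico (n / 2) (n - 1), ubTerm k i := by
  rw [← sum_unborderedWords_inv_pow, Finset.mul_sum]
  push_cast
  refine Finset.sum_congr rfl fun b hb => pow_sub_mul_pow_sub (Nat.cast_ne_zero.mpr hk) ?_
  exact length_le_of_mem_unborderedWords (fun i hi => by rw [Finset.mem_Ico] at hi; omega) hb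

theorem sq_sum_ubTerm_le_M_div (hk : k ≠ 0) (n : ℕ) :
    (∑ i ∈ range (n / 2), ubTerm k i) ^ 2 ≤ M k n / (k : ℝ) ^ (2 * n) := by
  rw [le_div_iff₀ (by positivity), mul_comm, ← cast_sum_sum_card_borderedPairs hk]
  exact_mod_cast sum_sum_card_borderedPairs_le_M (Finset.range_subset_range.mpr (by omega))

theorem M_div_le (hk : k ≠ 0) (n : ℕ) :
    M k n / (k : ℝ) ^ (2 * n) ≤
      (∑ i ∈ range (n / 2), ubTerm k i) ^ 2 +
        2 * ∑ i ∈ Ico (n / 2) (n - 1), ubTerm k i := by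
  rw [div_le_iff₀ (by positivity), add_mul, mul_assoc, mul_comm, mul_comm (∑ i ∈ _, _),
    ← cast_sum_sum_card_borderedPairs hk, ← cast_sum_pow_sub_mul_pow_sub hk]
  exact_mod_cast M_le

end Asymptotics

theorem stmt12 (k : ℕ) (hk : 2 ≤ k) :
    Summable (fun i : ℕ => (UB k (i + 1) : ℝ) / (k : ℝ) ^ (2 * (i + 1))) ∧
    Filter.Tendsto (fun n : ℕ => (M k n : ℝ) / (k : ℝ) ^ (2 * n)) Filter.atTop
      (nhds ((∑' i : ℕ, (UB k (i + 1) : ℝ) / (k : ℝ) ^ (2 * (i + 1))) ^ 2)) := by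
  have hk0 : k ≠ 0 := by omega
  have hsum : Summable (ubTerm k) := summable_ubTerm hk
  refine ⟨hsum, show Tendsto _ atTop (nhds ((∑' i, ubTerm k i) ^ 2)) from ?_⟩
  have hhalf :
      Tendsto (fun n => ∑ i ∈ range (n / 2), ubTerm k i) atTop (nhds (∑' i, ubTerm k i)) :=
    hsum.tendsto_sum_tsum_nat.comp (Nat.tendsto_div_const_atTop two_ne_zero)
  have htail : Tendsto (fun n => ∑ i ∈ Ico (n / 2) (n - 1), ubTerm k i) atTop (nhds 0) :=
    hsum.tendsto_sum_Ico_zero (Nat.tendsto_div_const_atTop two_ne_zero) (tendsto_sub_atTop_nat 1)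
      fun n => by omega
  refine tendsto_of_tendsto_of_tendsto_of_le_of_le (hhalf.pow 2) ?_ (sq_sum_ubTerm_le_M_div hk0)
    (M_div_le hk0)
  simpa only [mul_zero, add_zero] using (hhalf.pow 2).add (htail.const_mul 2)
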